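/- Let S be a finite nonempty set and let 𝒫 and 𝒫' be nonempty Hausdorff-compact collections of nonempty compact convex subsets of Δ(S) with equal half-space closures (as defined via sets of closed half-spaces containing some member, closed in the Hausdorff metric). Then for every φ ∈ ℝ^S, max_{P∈𝒫} min_{p∈P} E_p[φ] = max_{P'∈𝒫'} min_{p'∈P'} E_{p'}[φ]. -/
import Mathlib


open Set

noncomputable section

def simplex (S : Type*) [Fintype S] : Set (S → ℝ) :=
  {p | (∀ s, 0 ≤ p s) ∧ ∑ s, p s = 1}

def expE {S : Type*} [Fintype S] (p φ : S → ℝ) : ℝ := ∑ s, p s * φ s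

def minEU {S : Type*} [Fintype S] (P : Set (S → ℝ)) (φ : S → ℝ) : ℝ :=
  sInf ((fun p => expE p φ) '' P)

def maxEU {S : Type*} [Fintype S] (P : Set (S → ℝ)) (φ : S → ℝ) : ℝ :=
  sSup ((fun p => expE p φ) '' P)

def maxmin {S : Type*} [Fintype S] (C : Set (Set (S → ℝ))) (φ : S → ℝ) : ℝ :=
  sSup ((fun P => minEU P φ) '' C)

def minmax {S : Type*} [Fintype S] (C : Set (Set (S → ℝ))) (φ : S → ℝ) : ℝ :=
  sInf ((fun P => maxEU P φ) '' C)

abbrev Dl (S : Type*) [Fintype S] := {p : S → ℝ // p ∈ simplex S}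

def halfSpace {S : Type*} [Fintype S] (ψ : S → ℝ) (μ : ℝ) : Set (Dl S) :=
  {p : Dl S | μ ≤ expE p.1 ψ}

lemma expE_cont {S : Type*} [Fintype S] (φ : S → ℝ) :
    Continuous fun p : Dl S => expE p.1 φ := by
  unfold expE
  exact continuous_finset_sum _ fun s _ =>
    (((continuous_apply s).comp continuous_subtype_val).mul continuous_const)

lemma simplex_isCompact (S : Type*) [Fintype S] : IsCompact (simplex S) := by
  have hsub : simplex S ⊆ Set.pi univ fun _ : S => Icc (0:ℝ) 1 := by
    rintro p ⟨h0, h1⟩ s _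
    refine ⟨h0 s, ?_⟩
    calc p s ≤ ∑ t, p t := Finset.single_le_sum (fun t _ => h0 t) (Finset.mem_univ s)
    _ = 1 := h1
  have hclosed : IsClosed (simplex S) := by
    have h1 : IsClosed {p : S → ℝ | ∀ s, 0 ≤ p s} := by
      have : {p : S → ℝ | ∀ s, 0 ≤ p s} = ⋂ s, {p : S → ℝ | 0 ≤ p s} := by
        ext p; simp
      rw [this]
      exact isClosed_iInter fun s => isClosed_le continuous_const (continuous_apply s)
    have h2 : IsClosed {p : S → ℝ | ∑ s, p s = 1} :=
      isClosed_eq (continuous_finset_sum _ fun s _ => continuous_apply s) continuous_const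
    exact h1.inter h2
  exact (isCompact_univ_pi fun _ => isCompact_Icc).of_isClosed_subset hclosed hsub

instance instCompactDl {S : Type*} [Fintype S] : CompactSpace (Dl S) :=
  isCompact_iff_compactSpace.mp (simplex_isCompact S)

lemma expE_bound {S : Type*} [Fintype S] (φ : S → ℝ) (p : Dl S) :
    |expE p.1 φ| ≤ ∑ s, |φ s| := by
  calc |expE p.1 φ| ≤ ∑ s, |p.1 s * φ s| := Finset.abs_sum_le_sum_abs _ _
  _ ≤ ∑ s, |φ s| := by
      refine Finset.sum_le_sum fun s _ => ?_
      have h0 := p.2.1 s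
      have h1 : p.1 s ≤ 1 := by
        calc p.1 s ≤ ∑ t, p.1 t := Finset.single_le_sum (fun t _ => p.2.1 t) (Finset.mem_univ s)
        _ = 1 := p.2.2
      rw [abs_mul, abs_of_nonneg h0]
      exact mul_le_of_le_one_left (abs_nonneg _) h1

lemma expE_lip {S : Type*} [Fintype S] (φ : S → ℝ) (p q : Dl S) :
    |expE p.1 φ - expE q.1 φ| ≤ (∑ s, |φ s|) * dist p q := by
  have : expE p.1 φ - expE q.1 φ = ∑ s, (p.1 s - q.1 s) * φ s := by
    unfold expE; rw [← Finset.sum_sub_distrib]; congr 1; ext s; ring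
  rw [this]
  calc |∑ s, (p.1 s - q.1 s) * φ s| ≤ ∑ s, |(p.1 s - q.1 s) * φ s| :=
        Finset.abs_sum_le_sum_abs _ _
  _ ≤ ∑ s, dist p q * |φ s| := by
      refine Finset.sum_le_sum fun s _ => ?_
      rw [abs_mul]
      refine mul_le_mul_of_nonneg_right ?_ (abs_nonneg _)
      have : |p.1 s - q.1 s| = dist (p.1 s) (q.1 s) := (Real.dist_eq _ _).symm
      rw [this]
      calc dist (p.1 s) (q.1 s) ≤ dist p.1 q.1 := dist_le_pi_dist p.1 q.1 s
      _ = dist p q := (Subtype.dist_eq p q).symm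
  _ = (∑ s, |φ s|) * dist p q := by rw [Finset.sum_mul]; exact Finset.sum_congr rfl fun s _ => mul_comm _ _

def hsColl {S : Type*} [Fintype S]
    (C : Set (TopologicalSpace.NonemptyCompacts (Dl S))) :
    Set (TopologicalSpace.NonemptyCompacts (Dl S)) :=
  {H | (∃ ψ μ, (H : Set (Dl S)) = halfSpace ψ μ) ∧
        ∃ P ∈ C, (P : Set (Dl S)) ⊆ (H : Set (Dl S))}

lemma key_le {S : Type*} [Fintype S] (φ : S → ℝ)
    (C C' : Set (TopologicalSpace.NonemptyCompacts (Dl S)))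
    (hsub : hsColl C ⊆ closure (hsColl C'))
    (P : TopologicalSpace.NonemptyCompacts (Dl S)) (hPC : P ∈ C) :
    sInf ((fun p : Dl S => expE p.1 φ) '' (P : Set (Dl S))) ≤
      sSup ((fun Q : TopologicalSpace.NonemptyCompacts (Dl S) =>
        sInf ((fun p : Dl S => expE p.1 φ) '' (Q : Set (Dl S)))) '' C') := by
  set f : Dl S → ℝ := fun p => expE p.1 φ with hf
  set L : ℝ := ∑ s, |φ s| with hLdef
  have hLnn : 0 ≤ L := Finset.sum_nonneg fun s _ => abs_nonneg _
  have hfb : ∀ p : Dl S, |f p| ≤ L := expE_bound φ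
  have hbddA : BddAbove ((fun Q : TopologicalSpace.NonemptyCompacts (Dl S) =>
      sInf (f '' (Q : Set (Dl S)))) '' C') := by
    refine ⟨L, ?_⟩
    rintro x ⟨Q, hQ, rfl⟩
    obtain ⟨q, hq⟩ := Q.nonempty
    calc sInf (f '' (Q : Set (Dl S))) ≤ f q :=
          csInf_le ⟨-L, by rintro y ⟨r, hr, rfl⟩; linarith [(abs_le.mp (hfb r)).1]⟩
            (mem_image_of_mem f hq)
    _ ≤ L := (abs_le.mp (hfb q)).2
  obtain ⟨p₀, hp₀P, hp₀eq, hp₀min⟩ := P.isCompact.exists_sInf_image_eq_and_le P.nonempty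
    ((expE_cont φ).continuousOn)
  set m := sInf (f '' (P : Set (Dl S))) with hm
  have hHclosed : IsClosed (halfSpace φ m) := isClosed_le continuous_const (expE_cont φ)
  have hHne : (halfSpace φ m).Nonempty := ⟨p₀, le_of_eq hp₀eq⟩
  set H : TopologicalSpace.NonemptyCompacts (Dl S) :=
    ⟨⟨halfSpace φ m, hHclosed.isCompact⟩, hHne⟩ with hHdef
  have hHmem : H ∈ hsColl C :=
    ⟨⟨φ, m, rfl⟩, P, hPC, fun p hp => by
      show m ≤ expE p.1 φ
      rw [hp₀eq]; exact hp₀min p hp⟩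
  have hHcl : H ∈ closure (hsColl C') := hsub hHmem
  refine le_of_forall_pos_le_add fun ε hε => ?_
  set δ : ℝ := ε / (L + 1) with hδdef
  have hL1 : (0:ℝ) < L + 1 := by linarith
  have hδ : 0 < δ := div_pos hε hL1
  obtain ⟨H', hH'mem, hdist⟩ := Metric.mem_closure_iff.mp hHcl δ hδ
  obtain ⟨-, Q, hQC', hQsub⟩ := hH'mem
  obtain ⟨q₀, hq₀Q, hq₀eq, -⟩ := Q.isCompact.exists_sInf_image_eq_and_le Q.nonempty
    ((expE_cont φ).continuousOn)
  have hfin : EMetric.hausdorffEdist (H : Set (Dl S)) (H' : Set (Dl S)) ≠ ⊤ :=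
    Metric.hausdorffEdist_ne_top_of_nonempty_of_bounded H.nonempty H'.nonempty
      H.isCompact.isBounded H'.isCompact.isBounded
  have hdist' : Metric.hausdorffDist (H : Set (Dl S)) (H' : Set (Dl S)) < δ := by
    rwa [Metric.NonemptyCompacts.dist_eq] at hdist
  obtain ⟨p₂, hp₂H, hp₂d⟩ :=
    Metric.exists_dist_lt_of_hausdorffDist_lt' (hQsub hq₀Q) hdist' hfin
  have h1 : m ≤ f p₂ := hp₂H
  have h2 : |f q₀ - f p₂| ≤ L * dist q₀ p₂ := expE_lip φ q₀ p₂
  have hd : dist q₀ p₂ < δ := by rw [dist_comm]; exact hp₂d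
  have h3 : m - L * δ ≤ f q₀ := by
    have h21 := (abs_le.mp h2).1
    nlinarith [dist_nonneg (x := q₀) (y := p₂)]
  have h4 : sInf (f '' (Q : Set (Dl S))) ≤
      sSup ((fun Q : TopologicalSpace.NonemptyCompacts (Dl S) =>
        sInf (f '' (Q : Set (Dl S)))) '' C') := le_csSup hbddA (mem_image_of_mem _ hQC')
  have hLδ : L * δ ≤ ε := by
    have hc : δ * (L + 1) = ε := div_mul_cancel₀ ε hL1.ne'
    nlinarith
  rw [hq₀eq] at h4
  linarith

/-- collections with equal half-space closures induce the same
max-of-min functional. -/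
theorem stmt17 {S : Type*} [Fintype S] [Nonempty S]
    (C C' : Set (TopologicalSpace.NonemptyCompacts (Dl S)))
    (hne : C.Nonempty) (hcomp : IsCompact C)
    (hne' : C'.Nonempty) (hcomp' : IsCompact C')
    (hmem : ∀ P ∈ C, Convex ℝ (Subtype.val '' (P : Set (Dl S))))
    (hmem' : ∀ P ∈ C', Convex ℝ (Subtype.val '' (P : Set (Dl S))))
    (hhs : closure (hsColl C) = closure (hsColl C')) :
    ∀ φ : S → ℝ,
      sSup ((fun P : TopologicalSpace.NonemptyCompacts (Dl S) =>
          sInf ((fun p : Dl S => expE p.1 φ) '' (P : Set (Dl S)))) '' C)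
        = sSup ((fun P : TopologicalSpace.NonemptyCompacts (Dl S) =>
          sInf ((fun p : Dl S => expE p.1 φ) '' (P : Set (Dl S)))) '' C') := by
  intro φ
  have hsub1 : hsColl C ⊆ closure (hsColl C') := by rw [← hhs]; exact subset_closure
  have hsub2 : hsColl C' ⊆ closure (hsColl C) := by rw [hhs]; exact subset_closure
  apply le_antisymm
  · refine csSup_le (hne.image _) ?_
    rintro x ⟨P, hP, rfl⟩
    exact key_le φ C C' hsub1 P hP
  · refine csSup_le (hne'.image _) ?_
    rintro x ⟨P, hP, rfl⟩
    exact key_le φ C' C hsub2 P hP
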